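/- arXiv:2501.01724 — 4 statements merged into one kernel-verified Lean document; each statement's English description precedes it below -/
import Mathlib

section
/- Let ρ ∈ (0,1). Then for every natural number n ≥ 1, Φ(ρn+1) > −1/(ρ+1). -/
/-!
Since `log Γ` is convex on `(0, ∞)`, `Φ` is monotone there. Hence, using the recurrence
`Φ(x + 1) = Φ(x) + 1/x` and `Φ(2) = 1 - γ`,
`Φ(ρn + 1) ≥ Φ(ρ + 1) = Φ(ρ + 2) - 1/(ρ + 1) ≥ Φ(2) - 1/(ρ + 1) = 1 - γ - 1/(ρ + 1)`,
and `γ < 1`.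
-/

open Real Filter Topology

/-- The digamma function `Φ(z) = Γ'(z)/Γ(z)`. -/
noncomputable def digamma (z : ℝ) : ℝ := deriv Real.Gamma z / Real.Gamma z

theorem ne_neg_natCast_of_pos {x : ℝ} (hx : 0 < x) (m : ℕ) : x ≠ -m := by
  linarith [m.cast_nonneg (α := ℝ)]

theorem digamma_one : digamma 1 = -eulerMascheroniConstant := by
  rw [digamma, hasDerivAt_Gamma_one.deriv, Gamma_one, div_one]

theorem deriv_Gamma_add_one {x : ℝ} (hx : ∀ m : ℕ, x ≠ -m) :
    deriv Gamma (x + 1) = Gamma x + x * deriv Gamma x := by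
  have hx0 : x ≠ 0 := by simpa using hx 0
  have hrec : (fun y ↦ Gamma (y + 1)) =ᶠ[𝓝 x] fun y ↦ y * Gamma y := by
    filter_upwards [eventually_ne_nhds hx0] with y hy using Gamma_add_one hy
  rw [← deriv_comp_add_const, hrec.deriv_eq,
    ((hasDerivAt_id' x).fun_mul (differentiableAt_Gamma hx).hasDerivAt).deriv, one_mul]

theorem digamma_add_one {x : ℝ} (hx : ∀ m : ℕ, x ≠ -m) :
    digamma (x + 1) = digamma x + x⁻¹ := by
  have hx0 : x ≠ 0 := by simpa using hx 0
  rw [digamma, digamma, deriv_Gamma_add_one hx, Gamma_add_one hx0]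
  field_simp [Gamma_ne_zero hx]
  ring

theorem digamma_two : digamma 2 = 1 - eulerMascheroniConstant := by
  have h := digamma_add_one (ne_neg_natCast_of_pos one_pos)
  rw [one_add_one_eq_two, digamma_one] at h
  rw [h]
  ring

theorem digamma_eq_deriv_log_Gamma {x : ℝ} (hx : 0 < x) :
    digamma x = deriv (log ∘ Gamma) x := by
  rw [digamma, Function.comp_def,
    deriv.log (differentiableAt_Gamma (ne_neg_natCast_of_pos hx)) (Gamma_pos_of_pos hx).ne']

theorem digamma_monotoneOn : MonotoneOn digamma (Set.Ioi 0) := by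
  have hmono := convexOn_log_Gamma.monotoneOn_deriv fun x (hx : 0 < x) ↦
    (differentiableAt_Gamma (ne_neg_natCast_of_pos hx)).log (Gamma_pos_of_pos hx).ne'
  exact hmono.congr fun x hx ↦ (digamma_eq_deriv_log_Gamma hx).symm

theorem digamma_lower_bound (ρ : ℝ) (hρ : ρ ∈ Set.Ioo (0:ℝ) 1) :
    ∀ n : ℕ, 1 ≤ n → digamma (ρ * n + 1) > -(1 / (ρ + 1)) := by
  intro n hn
  have hρ0 : 0 < ρ := hρ.1
  have hn1 : (1 : ℝ) ≤ n := by exact_mod_cast hn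
  have hρ_pos : 0 < ρ + 1 := by linarith
  have hstep : digamma (ρ + 1 + 1) = digamma (ρ + 1) + (ρ + 1)⁻¹ :=
    digamma_add_one (ne_neg_natCast_of_pos hρ_pos)
  have hle_n : digamma (ρ + 1) ≤ digamma (ρ * n + 1) :=
    digamma_monotoneOn (Set.mem_Ioi.2 hρ_pos) (Set.mem_Ioi.2 (by positivity)) (by nlinarith)
  have hle_two : digamma 2 ≤ digamma (ρ + 1 + 1) :=
    digamma_monotoneOn (Set.mem_Ioi.2 two_pos) (Set.mem_Ioi.2 (by linarith)) (by linarith)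
  have hγ := eulerMascheroniConstant_lt_two_thirds
  rw [digamma_two] at hle_two
  rw [one_div]
  linarith
end

section
/- For every real z > 0, the inequalities ln z − 1/z ≤ Φ(z) ≤ ln z − 1/(2z) hold. -/
/-!
Since `log ∘ Γ` is convex with `log Γ(z + 1) - log Γ(z) = log z`, its derivative `Φ` satisfies
`Φ(z) ≤ log z ≤ Φ(z + 1) = Φ(z) + 1/z`, which is the lower bound. For the upper bound, the defect
`log z - 1/(2z) - Φ(z)` does not increase under `z ↦ z + 1`, because the trapezoid rule
overestimates `∫_z^{z+1} dt/t`; and it is at least `-1/(2z) → 0` by the first inequality.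
-/

open Real Filter Topology

lemma Real.log_le_half_sub_inv {t : ℝ} (ht : 1 ≤ t) : log t ≤ (t - t⁻¹) / 2 := by
  rw [← sinh_log (by positivity)]
  exact self_le_sinh_iff.2 (log_nonneg ht)

lemma Real.log_sub_log_le_trapezoid {x y : ℝ} (hx : 0 < x) (hxy : x ≤ y) :
    log y - log x ≤ (y - x) * (x⁻¹ + y⁻¹) / 2 := by
  have hy : 0 < y := hx.trans_le hxy
  have h := log_le_half_sub_inv ((one_le_div hx).2 hxy)
  rw [log_div hy.ne' hx.ne'] at h
  convert h using 1
  field_simp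
  ring

section digamma

variable {z : ℝ}

lemma hasDerivAt_log_Gamma (hz : 0 < z) : HasDerivAt (log ∘ Gamma) (digamma z) z :=
  (differentiableAt_Gamma fun m => by linarith [m.cast_nonneg (α := ℝ)]).hasDerivAt.log
    (Gamma_pos_of_pos hz).ne'

lemma log_Gamma_add_one (hz : 0 < z) : log (Gamma (z + 1)) = log (Gamma z) + log z := by
  rw [Gamma_add_one hz.ne', log_mul hz.ne' (Gamma_pos_of_pos hz).ne', add_comm]

lemma digamma_add_one_s3 (hz : 0 < z) : digamma (z + 1) = digamma z + z⁻¹ := by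
  have h₁ : HasDerivAt (fun x => (log ∘ Gamma) (x + 1)) (digamma (z + 1)) z :=
    (hasDerivAt_log_Gamma (by linarith)).comp_add_const z 1
  have h₂ : HasDerivAt (fun x => (log ∘ Gamma) x + log x) (digamma z + z⁻¹) z :=
    (hasDerivAt_log_Gamma hz).add (hasDerivAt_log hz.ne')
  refine h₁.unique (h₂.congr_of_eventuallyEq ?_)
  filter_upwards [eventually_gt_nhds hz] with x hx
  exact log_Gamma_add_one hx

lemma slope_log_Gamma_add_one (hz : 0 < z) : slope (log ∘ Gamma) z (z + 1) = log z := by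
  rw [slope_def_field, add_sub_cancel_left, div_one, Function.comp_apply, Function.comp_apply,
    log_Gamma_add_one hz, add_sub_cancel_left]

lemma digamma_le_log (hz : 0 < z) : digamma z ≤ log z :=
  slope_log_Gamma_add_one hz ▸ convexOn_log_Gamma.le_slope_of_hasDerivAt hz
    (Set.mem_Ioi.2 (by linarith)) (lt_add_one z) (hasDerivAt_log_Gamma hz)

lemma log_le_digamma_add_one (hz : 0 < z) : log z ≤ digamma (z + 1) :=
  slope_log_Gamma_add_one hz ▸ convexOn_log_Gamma.slope_le_of_hasDerivAt hz
    (Set.mem_Ioi.2 (by linarith)) (lt_add_one z) (hasDerivAt_log_Gamma (by linarith))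

lemma log_sub_inv_le_digamma (hz : 0 < z) : log z - 1 / z ≤ digamma z := by
  linarith [log_le_digamma_add_one hz, digamma_add_one_s3 hz, one_div z]

noncomputable def digammaUpperDefect (z : ℝ) : ℝ := log z - 1 / (2 * z) - digamma z

lemma digammaUpperDefect_add_one_le (hz : 0 < z) :
    digammaUpperDefect (z + 1) ≤ digammaUpperDefect z := by
  have h := log_sub_log_le_trapezoid hz (le_add_of_nonneg_right zero_le_one)
  rw [add_sub_cancel_left, one_mul] at h
  simp only [digammaUpperDefect, digamma_add_one_s3 hz]
  have e : 1 / (2 * (z + 1)) - 1 / (2 * z) = (z⁻¹ + (z + 1)⁻¹) / 2 - z⁻¹ := by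
    field_simp
    ring
  linarith

lemma neg_inv_le_digammaUpperDefect (hz : 0 < z) : -(1 / (2 * z)) ≤ digammaUpperDefect z := by
  rw [digammaUpperDefect]
  linarith [digamma_le_log hz]

lemma digammaUpperDefect_nonneg (hz : 0 < z) : 0 ≤ digammaUpperDefect z := by
  have hmono : ∀ n : ℕ, digammaUpperDefect (z + n) ≤ digammaUpperDefect z := by
    intro n
    induction n with
    | zero => simp
    | succ n ih =>
      rw [Nat.cast_succ, ← add_assoc]
      exact (digammaUpperDefect_add_one_le (by positivity)).trans ih
  have hlim : Tendsto (fun n : ℕ => -(1 / (2 * (z + n)))) atTop (𝓝 0) := by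
    have := (tendsto_atTop_add_const_left _ z tendsto_natCast_atTop_atTop).const_mul_atTop two_pos
    simpa using (tendsto_inv_atTop_zero.comp this).neg
  exact le_of_tendsto' hlim fun n =>
    (neg_inv_le_digammaUpperDefect (by positivity)).trans (hmono n)

end digamma

theorem digamma_log_bounds (z : ℝ) (hz : 0 < z) :
    Real.log z - 1 / z ≤ digamma z ∧ digamma z ≤ Real.log z - 1 / (2 * z) :=
  ⟨log_sub_inv_le_digamma hz, sub_nonneg.1 (digammaUpperDefect_nonneg hz)⟩
end

section
/- Let ρ0 ∈ (0,1) and 0 < t1 < T. Then the series Σ_{n=1}^∞ (−1)^n n t^{ρn} (ln t − Φ(ρn+1))/Γ(ρn+1) converges uniformly (i.e., its partial sums converge uniformly) on the set of pairs (t, ρ) with t ∈ [t1, T] and ρ ∈ [ρ0, 1]. -/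
/-!
Weierstrass M-test. Convexity of `Γ` gives `0 ≤ Φ(x) ≤ x - 1` for `x ≥ 2`, and `Γ` is monotone on
`[2, ∞)`, so once `ρ₀ n ≥ 1` the `n`-th term is bounded on the whole rectangle by
`C · (4 max(1, T))ⁿ / Γ(ρ₀ n + 1)`. This is summable because `Γ(x + 1) ≥ ⌊x⌋!` outgrows every
exponential.
-/

open Real Filter Topology

lemma differentiableAt_Gamma_of_pos {x : ℝ} (hx : 0 < x) : DifferentiableAt ℝ Gamma x :=
  differentiableAt_Gamma fun m ↦ by linarith [(Nat.cast_nonneg m : (0 : ℝ) ≤ m)]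

lemma deriv_Gamma_le_sub_one_mul_Gamma {x : ℝ} (hx : 0 < x) :
    deriv Gamma x ≤ (x - 1) * Gamma x := by
  have h := convexOn_Gamma.deriv_le_slope hx (Set.mem_Ioi.2 (by linarith))
    (lt_add_one x) (differentiableAt_Gamma_of_pos hx)
  rwa [slope_def_field, add_sub_cancel_left, div_one, Gamma_add_one hx.ne', ← sub_one_mul] at h

lemma Gamma_sub_Gamma_sub_one_le_deriv_Gamma {x : ℝ} (hx : 1 < x) :
    Gamma x - Gamma (x - 1) ≤ deriv Gamma x := by
  have h := convexOn_Gamma.slope_le_deriv (sub_pos.2 hx) (Set.mem_Ioi.2 (by linarith))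
    (sub_one_lt x) (differentiableAt_Gamma_of_pos (by linarith))
  rwa [slope_def_field, sub_sub_cancel, div_one] at h

lemma digamma_le_sub_one {x : ℝ} (hx : 0 < x) : digamma x ≤ x - 1 :=
  (div_le_iff₀ (Gamma_pos_of_pos hx)).2 (deriv_Gamma_le_sub_one_mul_Gamma hx)

lemma digamma_nonneg {x : ℝ} (hx : 2 ≤ x) : 0 ≤ digamma x := by
  have hx1 : 0 < x - 1 := by linarith
  have hΓ : Gamma x = (x - 1) * Gamma (x - 1) := by
    simpa using Gamma_add_one hx1.ne'
  have hmono : Gamma (x - 1) ≤ Gamma x := by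
    rw [hΓ]; exact le_mul_of_one_le_left (Gamma_pos_of_pos hx1).le (by linarith)
  exact div_nonneg
    ((sub_nonneg.2 hmono).trans (Gamma_sub_Gamma_sub_one_le_deriv_Gamma (by linarith)))
    (Gamma_pos_of_pos (by linarith)).le

lemma abs_digamma_le {x : ℝ} (hx : 2 ≤ x) : |digamma x| ≤ x - 1 := by
  rw [abs_of_nonneg (digamma_nonneg hx)]
  exact digamma_le_sub_one (by linarith)

lemma tendsto_rpow_div_Gamma_add_one {D : ℝ} (hD : 1 ≤ D) :
    Tendsto (fun x : ℝ ↦ D ^ x / Gamma (x + 1)) atTop (𝓝 0) := by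
  have hfac : Tendsto (fun x : ℝ ↦ D * (D ^ ⌊x⌋₊ / (⌊x⌋₊).factorial)) atTop (𝓝 0) := by
    simpa using ((FloorSemiring.tendsto_pow_div_factorial_atTop D).comp
      tendsto_nat_floor_atTop).const_mul D
  refine tendsto_of_tendsto_of_tendsto_of_le_of_le' tendsto_const_nhds hfac ?_ ?_
  · filter_upwards [eventually_ge_atTop 0] with x hx
    have := Gamma_pos_of_pos (by linarith : 0 < x + 1)
    positivity
  · filter_upwards [eventually_ge_atTop 1] with x hx
    set m := ⌊x⌋₊
    have hm : (1 : ℝ) ≤ m := by exact_mod_cast Nat.le_floor (by exact_mod_cast hx)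
    have hmx : (m : ℝ) ≤ x := Nat.floor_le (by linarith)
    have hΓ : (m.factorial : ℝ) ≤ Gamma (x + 1) := by
      rw [← Gamma_nat_eq_factorial]
      exact Gamma_strictMonoOn_Ici.monotoneOn (Set.mem_Ici.2 (by linarith))
        (Set.mem_Ici.2 (by linarith)) (by linarith)
    have hpow : D ^ x ≤ D * D ^ m := by
      rw [← pow_succ', ← rpow_natCast]
      exact rpow_le_rpow_of_exponent_le hD (by push_cast; exact (Nat.lt_floor_add_one x).le)
    calc D ^ x / Gamma (x + 1) ≤ D * D ^ m / m.factorial :=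
          div_le_div₀ (by positivity) hpow (by positivity) hΓ
      _ = D * (D ^ m / m.factorial) := mul_div_assoc _ _ _

lemma tendsto_pow_div_Gamma_mul_add_one {c B : ℝ} (hc : 0 < c) (hB : 1 ≤ B) :
    Tendsto (fun n : ℕ ↦ B ^ n / Gamma (c * n + 1)) atTop (𝓝 0) := by
  have hD : 1 ≤ B ^ c⁻¹ := one_le_rpow hB (inv_nonneg.2 hc.le)
  refine ((tendsto_rpow_div_Gamma_add_one hD).comp
    (tendsto_natCast_atTop_atTop.const_mul_atTop hc)).congr fun n ↦ ?_
  simp only [Function.comp_apply]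
  rw [← rpow_mul (by linarith), ← mul_assoc, inv_mul_cancel₀ hc.ne', one_mul, rpow_natCast]

lemma summable_pow_div_Gamma_mul_add_one {c : ℝ} (hc : 0 < c) (B : ℝ) :
    Summable fun n : ℕ ↦ B ^ n / Gamma (c * n + 1) := by
  set C := 2 * max 1 |B|
  have hC : 1 ≤ C := by linarith [le_max_left 1 |B|]
  refine summable_geometric_two.of_norm_bounded_eventually ?_
  rw [Nat.cofinite_eq_atTop]
  filter_upwards [(tendsto_pow_div_Gamma_mul_add_one hc hC).eventually_le_const one_pos]
    with n hn
  have hΓ := Gamma_pos_of_pos (by positivity : 0 < c * n + 1)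
  calc ‖B ^ n / Gamma (c * n + 1)‖ = |B| ^ n / Gamma (c * n + 1) := by
        rw [norm_div, norm_pow, Real.norm_eq_abs, Real.norm_of_nonneg hΓ.le]
    _ ≤ (C / 2) ^ n / Gamma (c * n + 1) := by
        gcongr; linarith [le_max_right 1 |B|]
    _ = (1 / 2) ^ n * (C ^ n / Gamma (c * n + 1)) := by rw [div_pow, one_div_pow]; ring
    _ ≤ (1 / 2) ^ n := mul_le_of_le_one_right (by positivity) hn

/-- Summing over `n` gives `∂/∂ρ` of the Mittag-Leffler function `E_ρ(-t^ρ)`. -/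
noncomputable def mittagLefflerDerivTerm (n : ℕ) (t ρ : ℝ) : ℝ :=
  (-1 : ℝ) ^ n * n * t ^ (ρ * n) * (log t - digamma (ρ * n + 1)) / Gamma (ρ * n + 1)

lemma abs_mittagLefflerDerivTerm_le {t T ρ ρ₀ L : ℝ} {n : ℕ} (ht : 0 < t) (htT : t ≤ T)
    (hlog : |log t| ≤ L) (hρ₀ρ : ρ₀ ≤ ρ) (hρ : ρ ≤ 1) (hn : 1 ≤ ρ₀ * n) :
    |mittagLefflerDerivTerm n t ρ| ≤ (L + 1) * ((4 * max 1 T) ^ n / Gamma (ρ₀ * n + 1)) := by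
  have hρn : ρ₀ * n ≤ ρ * n := mul_le_mul_of_nonneg_right hρ₀ρ n.cast_nonneg
  have hρn' : ρ * n ≤ n := mul_le_of_le_one_left n.cast_nonneg hρ
  have hL : 0 ≤ L := (abs_nonneg _).trans hlog
  have h2n : (n : ℝ) ≤ 2 ^ n := by exact_mod_cast n.lt_two_pow_self.le
  have hpow : t ^ (ρ * n) ≤ max 1 T ^ n := by
    rw [← rpow_natCast]
    exact (rpow_le_rpow ht.le (htT.trans (le_max_right _ _)) (by linarith)).trans
      (rpow_le_rpow_of_exponent_le (le_max_left _ _) hρn')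
  have hdig : |log t - digamma (ρ * n + 1)| ≤ (L + 1) * 2 ^ n := by
    have := abs_digamma_le (by linarith : 2 ≤ ρ * n + 1)
    have := abs_sub (log t) (digamma (ρ * n + 1))
    nlinarith
  have hΓ : Gamma (ρ₀ * n + 1) ≤ Gamma (ρ * n + 1) :=
    Gamma_strictMonoOn_Ici.monotoneOn (Set.mem_Ici.2 (by linarith)) (Set.mem_Ici.2 (by linarith))
      (by linarith)
  have hΓ₀ := Gamma_pos_of_pos (by linarith : 0 < ρ₀ * n + 1)
  calc |mittagLefflerDerivTerm n t ρ|
        = n * t ^ (ρ * n) * |log t - digamma (ρ * n + 1)| / Gamma (ρ * n + 1) := by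
          rw [mittagLefflerDerivTerm, abs_div, abs_mul, abs_mul, abs_mul, abs_pow, abs_neg,
            abs_one, one_pow, one_mul, Nat.abs_cast, abs_of_nonneg (rpow_nonneg ht.le _),
            abs_of_pos (hΓ₀.trans_le hΓ)]
    _ ≤ 2 ^ n * max 1 T ^ n * ((L + 1) * 2 ^ n) / Gamma (ρ₀ * n + 1) := by
          gcongr
    _ = (L + 1) * ((4 * max 1 T) ^ n / Gamma (ρ₀ * n + 1)) := by
          rw [mul_pow, show (4 : ℝ) = 2 * 2 by norm_num, mul_pow]; ring

theorem series_uniform_convergence_general (ρ₀ t₁ T : ℝ) (hρ₀ : ρ₀ ∈ Set.Ioo (0:ℝ) 1)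
    (ht₁ : 0 < t₁) :
    ∃ g : ℝ × ℝ → ℝ,
      TendstoUniformlyOn
        (fun N : ℕ => fun p : ℝ × ℝ =>
          ∑ n ∈ Finset.Icc 1 N,
            (-1 : ℝ) ^ n * n * p.1 ^ (p.2 * n) *
              (Real.log p.1 - digamma (p.2 * n + 1)) / Real.Gamma (p.2 * n + 1))
        g Filter.atTop (Set.Icc t₁ T ×ˢ Set.Icc ρ₀ 1) := by
  set u : ℕ → ℝ := fun n ↦
    (max |log t₁| |log T| + 1) * ((4 * max 1 T) ^ n / Gamma (ρ₀ * n + 1))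
  have hu : Summable u := (summable_pow_div_Gamma_mul_add_one hρ₀.1 _).mul_left _
  have hbound : ∀ᶠ n in atTop, ∀ p ∈ Set.Icc t₁ T ×ˢ Set.Icc ρ₀ 1,
      ‖mittagLefflerDerivTerm n p.1 p.2‖ ≤ u n := by
    filter_upwards [(tendsto_natCast_atTop_atTop.const_mul_atTop hρ₀.1).eventually_ge_atTop 1]
      with n hn
    rintro ⟨t, ρ⟩ ⟨⟨ht₁t, htT⟩, hρ₀ρ, hρ⟩
    have ht := ht₁.trans_le ht₁t
    exact abs_mittagLefflerDerivTerm_le ht htT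
      (abs_le_max_abs_abs (log_le_log ht₁ ht₁t) (log_le_log ht htT)) hρ₀ρ hρ hn
  refine ⟨_, (tendstoUniformlyOn_tsum_nat_eventually ((summable_nat_add_iff 1).2 hu)
    ((tendsto_add_atTop_nat 1).eventually hbound)).congr ?_⟩
  filter_upwards with N p _
  dsimp only
  rw [Finset.range_eq_Ico, Finset.sum_Ico_add' (fun n ↦ mittagLefflerDerivTerm n p.1 p.2),
    zero_add, Finset.Ico_add_one_right_eq_Icc]
  rfl

theorem series_uniform_convergence (ρ₀ t₁ T : ℝ) (hρ₀ : ρ₀ ∈ Set.Ioo (0:ℝ) 1)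
    (ht₁ : 0 < t₁) (ht₁T : t₁ < T) :
    ∃ g : ℝ × ℝ → ℝ,
      TendstoUniformlyOn
        (fun N : ℕ => fun p : ℝ × ℝ =>
          ∑ n ∈ Finset.Icc 1 N,
            (-1 : ℝ) ^ n * n * p.1 ^ (p.2 * n) *
              (Real.log p.1 - digamma (p.2 * n + 1)) / Real.Gamma (p.2 * n + 1))
        g Filter.atTop (Set.Icc t₁ T ×ˢ Set.Icc ρ₀ 1) :=
  series_uniform_convergence_general ρ₀ t₁ T hρ₀ ht₁
end

section
/- Let ρ0 ∈ (0,1), 0 < t1 < T, t ∈ [t1, T] and ρ ∈ (ρ0, 1). Then the function ρ ↦ E_ρ(−t^ρ) is differentiable at ρ and its derivative equals Σ_{n=1}^∞ (−1)^n n t^{ρn} (ln t − Φ(ρn+1))/Γ(ρn+1). -/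
open Real Filter Topology

/-- The two-parameter Mittag-Leffler function `E_{ρ,μ}(z)` (real version). -/
noncomputable def mittagLeffler (ρ μ z : ℝ) : ℝ := ∑' k : ℕ, z ^ k / Real.Gamma (ρ * k + μ)

namespace MLAux

lemma gamma_le_one {x : ℝ} (h1 : 1 ≤ x) (h2 : x ≤ 2) : Real.Gamma x ≤ 1 := by
  have hx0 : (0:ℝ) < x := by linarith
  have hc := Real.convexOn_log_Gamma
  have h := hc.2 (Set.mem_Ioi.mpr one_pos) (Set.mem_Ioi.mpr two_pos)
      (show (0:ℝ) ≤ 2 - x by linarith) (show (0:ℝ) ≤ x - 1 by linarith)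
      (show (2 - x) + (x - 1) = 1 by ring)
  simp only [smul_eq_mul, Function.comp_apply] at h
  have hx : (2 - x) * 1 + (x - 1) * 2 = x := by ring
  rw [hx, Real.Gamma_one, Real.Gamma_two, Real.log_one, mul_zero, mul_zero, add_zero] at h
  exact (Real.log_nonpos_iff (Real.Gamma_pos_of_pos hx0).le).mp h

lemma gamma_le_two {x : ℝ} (h1 : 2 ≤ x) (h2 : x ≤ 3) : Real.Gamma x ≤ 2 := by
  have hx0 : (0:ℝ) < x := by linarith
  have hc := Real.convexOn_log_Gamma
  have h := hc.2 (Set.mem_Ioi.mpr two_pos) (Set.mem_Ioi.mpr (by norm_num : (0:ℝ) < 3))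
      (show (0:ℝ) ≤ 3 - x by linarith) (show (0:ℝ) ≤ x - 2 by linarith)
      (show (3 - x) + (x - 2) = 1 by ring)
  simp only [smul_eq_mul, Function.comp_apply] at h
  have hx : (3 - x) * 2 + (x - 2) * 3 = x := by ring
  have hΓ3 : Real.Gamma 3 = 2 := by
    have : (3:ℝ) = 2 + 1 := by norm_num
    rw [this, Real.Gamma_add_one two_ne_zero, Real.Gamma_two]; norm_num
  rw [hx, Real.Gamma_two, hΓ3, Real.log_one, mul_zero, zero_add] at h
  have hle : Real.log (Real.Gamma x) ≤ Real.log 2 := by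
    have h2' : (0:ℝ) ≤ Real.log 2 := Real.log_nonneg one_le_two
    nlinarith
  exact (Real.log_le_log_iff (Real.Gamma_pos_of_pos hx0) two_pos).mp hle

lemma half_le_gamma {x : ℝ} (h1 : 1 ≤ x) : 1 / 2 ≤ Real.Gamma x := by
  rcases le_or_gt x 2 with h2 | h2
  · have hx0 : (0:ℝ) < x := by linarith
    have hc := Real.convexOn_log_Gamma
    have h := hc.2 (Set.mem_Ioi.mpr hx0) (Set.mem_Ioi.mpr (by linarith : (0:ℝ) < 4 - x))
        (show (0:ℝ) ≤ 1/2 by norm_num) (show (0:ℝ) ≤ 1/2 by norm_num)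
        (show (1/2 : ℝ) + 1/2 = 1 by norm_num)
    simp only [smul_eq_mul, Function.comp_apply] at h
    have hx : (1/2 : ℝ) * x + (1/2) * (4 - x) = 2 := by ring
    rw [hx, Real.Gamma_two, Real.log_one] at h
    have hup : Real.Gamma (4 - x) ≤ 2 := gamma_le_two (by linarith) (by linarith)
    have hlog4 : Real.log (Real.Gamma (4 - x)) ≤ Real.log 2 :=
      (Real.log_le_log_iff (Real.Gamma_pos_of_pos (by linarith)) two_pos).mpr hup
    have : Real.log (1/2) ≤ Real.log (Real.Gamma x) := by
      rw [Real.log_div one_ne_zero two_ne_zero, Real.log_one]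
      linarith
    exact (Real.log_le_log_iff (by norm_num) (Real.Gamma_pos_of_pos hx0)).mp this
  · have := Real.Gamma_strictMonoOn_Ici.monotoneOn (Set.mem_Ici.mpr le_rfl)
      (Set.mem_Ici.mpr h2.le) h2.le
    rw [Real.Gamma_two] at this
    linarith

lemma gamma_le_two_mul_gamma {x y : ℝ} (hy : 1 ≤ y) (hxy : y ≤ x) :
    Real.Gamma y ≤ 2 * Real.Gamma x := by
  rcases le_or_gt 2 y with h | h
  · have hmono := Real.Gamma_strictMonoOn_Ici.monotoneOn (Set.mem_Ici.mpr h)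
      (Set.mem_Ici.mpr (h.trans hxy)) hxy
    have := Real.Gamma_pos_of_pos (show (0:ℝ) < x by linarith)
    linarith
  · have h1 : Real.Gamma y ≤ 1 := gamma_le_one hy h.le
    have h2 : 1/2 ≤ Real.Gamma x := half_le_gamma (hy.trans hxy)
    linarith

lemma gamma_growth {x a : ℝ} (hx : 1 < x) (ha : 0 < a) :
    (x - 1) ^ a * Real.Gamma x ≤ Real.Gamma (x + a) := by
  have h0 : (0:ℝ) < x - 1 := by linarith
  have hc := Real.convexOn_log_Gamma
  have hs := hc.slope_mono_adjacent (Set.mem_Ioi.mpr h0)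
      (Set.mem_Ioi.mpr (show (0:ℝ) < x + a by linarith))
      (show x - 1 < x by linarith) (show x < x + a by linarith)
  simp only [Function.comp_apply] at hs
  have hΓ : Real.Gamma x = (x - 1) * Real.Gamma (x - 1) := by
    have h := Real.Gamma_add_one (s := x - 1) h0.ne'
    rwa [sub_add_cancel] at h
  have hΓ1pos : 0 < Real.Gamma (x - 1) := Real.Gamma_pos_of_pos h0
  have hΓxpos : 0 < Real.Gamma x := Real.Gamma_pos_of_pos (by linarith)
  have hΓapos : 0 < Real.Gamma (x + a) := Real.Gamma_pos_of_pos (by linarith)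
  have hnum : Real.log (Real.Gamma x) - Real.log (Real.Gamma (x - 1)) = Real.log (x - 1) := by
    rw [hΓ, Real.log_mul h0.ne' hΓ1pos.ne']; ring
  have hden : x - (x - 1) = 1 := by ring
  have hden2 : x + a - x = a := by ring
  rw [hnum, hden, hden2, div_one] at hs
  have key : a * Real.log (x - 1) ≤ Real.log (Real.Gamma (x + a)) - Real.log (Real.Gamma x) := by
    have := (le_div_iff₀ ha).mp hs
    linarith
  have : (x - 1) ^ a * Real.Gamma x =
      Real.exp (a * Real.log (x - 1) + Real.log (Real.Gamma x)) := by
    rw [Real.exp_add, Real.exp_log hΓxpos, Real.rpow_def_of_pos h0, mul_comm a]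
  rw [this, ← Real.exp_log hΓapos]
  apply Real.exp_le_exp.mpr
  linarith



lemma hasDerivAt_logGamma {x : ℝ} (hx : 0 < x) :
    HasDerivAt (Real.log ∘ Real.Gamma) (digamma x) x := by
  have hne : ∀ m : ℕ, x ≠ -(m : ℝ) := fun m =>
    ne_of_gt (lt_of_le_of_lt (neg_nonpos.mpr m.cast_nonneg) hx)
  exact (Real.differentiableAt_Gamma hne).hasDerivAt.log (Real.Gamma_pos_of_pos hx).ne'

lemma digamma_le_log {x : ℝ} (hx : 0 < x) : digamma x ≤ Real.log x := by
  have h := Real.convexOn_log_Gamma.le_slope_of_hasDerivAt (Set.mem_Ioi.mpr hx)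
      (Set.mem_Ioi.mpr (by linarith : (0:ℝ) < x + 1)) (by linarith) (hasDerivAt_logGamma hx)
  rw [slope_def_field] at h
  simp only [Function.comp_apply] at h
  rw [Real.Gamma_add_one hx.ne', Real.log_mul hx.ne' (Real.Gamma_pos_of_pos hx).ne'] at h
  have hden : x + 1 - x = 1 := by ring
  rw [hden, div_one] at h
  linarith

lemma log_le_digamma {x : ℝ} (hx : 1 < x) : Real.log (x - 1) ≤ digamma x := by
  have h0 : (0:ℝ) < x - 1 := by linarith
  have h := Real.convexOn_log_Gamma.slope_le_of_hasDerivAt (Set.mem_Ioi.mpr h0)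
      (Set.mem_Ioi.mpr (by linarith : (0:ℝ) < x)) (by linarith)
      (hasDerivAt_logGamma (by linarith))
  rw [slope_def_field] at h
  simp only [Function.comp_apply] at h
  have hΓ : Real.Gamma x = (x - 1) * Real.Gamma (x - 1) := by
    have h2 := Real.Gamma_add_one (s := x - 1) h0.ne'
    rwa [sub_add_cancel] at h2
  rw [hΓ, Real.log_mul h0.ne' (Real.Gamma_pos_of_pos h0).ne'] at h
  have hden : x - (x - 1) = 1 := by ring
  rw [hden, div_one] at h
  linarith

lemma summable_pow_div_gamma {a : ℝ} (ha : 0 < a) (A : ℝ) (hA : 0 < A) :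
    Summable (fun k : ℕ => A ^ k / Real.Gamma (a * k + 1)) := by
  apply summable_of_ratio_norm_eventually_le (r := 1/2) (by norm_num)
  have hnat : Tendsto (fun k : ℕ => a * (k : ℝ)) atTop atTop :=
    Tendsto.const_mul_atTop ha tendsto_natCast_atTop_atTop
  have h1 : Tendsto (fun k : ℕ => (a * (k : ℝ)) ^ a) atTop atTop :=
    (tendsto_rpow_atTop ha).comp hnat
  filter_upwards [h1.eventually_ge_atTop (2 * A), hnat.eventually_ge_atTop 1] with k hk hk1
  have hx1 : (1:ℝ) < a * k + 1 := by linarith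
  have hΓx : 0 < Real.Gamma (a * k + 1) := Real.Gamma_pos_of_pos (by linarith)
  have hΓy : 0 < Real.Gamma (a * (k + 1 : ℕ) + 1) := Real.Gamma_pos_of_pos (by positivity)
  have harg : a * ((k + 1 : ℕ) : ℝ) + 1 = (a * k + 1) + a := by push_cast; ring
  have hgrow : (a * k) ^ a * Real.Gamma (a * k + 1) ≤ Real.Gamma ((a * k + 1) + a) := by
    have := gamma_growth (x := a * k + 1) (a := a) hx1 ha
    simpa using this
  have hkey : 2 * A * Real.Gamma (a * k + 1) ≤ Real.Gamma (a * (k + 1 : ℕ) + 1) := by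
    rw [harg]
    calc 2 * A * Real.Gamma (a * k + 1) ≤ (a * k) ^ a * Real.Gamma (a * k + 1) := by
          apply mul_le_mul_of_nonneg_right hk hΓx.le
      _ ≤ _ := hgrow
  rw [Real.norm_eq_abs, Real.norm_eq_abs, abs_div, abs_div, abs_of_pos hΓx, abs_of_pos hΓy,
    abs_pow, abs_pow, abs_of_pos hA]
  rw [div_le_iff₀ hΓy, pow_succ]
  have h2A : 0 < 2 * A * Real.Gamma (a * k + 1) := by positivity
  calc A ^ k * A = (1/2 * (A ^ k / Real.Gamma (a * k + 1))) * (2 * A * Real.Gamma (a * k + 1)) := by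
        field_simp
    _ ≤ (1/2 * (A ^ k / Real.Gamma (a * k + 1))) * Real.Gamma (a * (k + 1 : ℕ) + 1) := by
        apply mul_le_mul_of_nonneg_left hkey (by positivity)

end MLAux

set_option maxHeartbeats 1000000 in
theorem hasDerivAt_mittagLeffler (ρ₀ t₁ T t ρ : ℝ) (hρ₀ : ρ₀ ∈ Set.Ioo (0:ℝ) 1)
    (ht₁ : 0 < t₁) (ht₁T : t₁ < T) (ht : t ∈ Set.Icc t₁ T) (hρ : ρ ∈ Set.Ioo ρ₀ 1) :
    HasDerivAt (fun r : ℝ => mittagLeffler r 1 (-(t ^ r)))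
      (∑' n : ℕ, (-1 : ℝ) ^ n * n * t ^ (ρ * n) *
        (Real.log t - digamma (ρ * n + 1)) / Real.Gamma (ρ * n + 1)) ρ := by
  obtain ⟨hρ₀0, hρ₀1⟩ := hρ₀
  obtain ⟨ht1, ht2⟩ := ht
  obtain ⟨hρ1, hρ2⟩ := hρ
  have htpos : 0 < t := lt_of_lt_of_le ht₁ ht1
  set M : ℝ := max 1 T with hMdef
  have hM1 : (1:ℝ) ≤ M := le_max_left _ _
  have htM : t ≤ M := ht2.trans (le_max_right _ _)
  have hMpos : (0:ℝ) < M := lt_of_lt_of_le one_pos hM1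
  set L : ℝ := |Real.log t₁| + |Real.log T| with hLdef
  set P : ℝ := |Real.log ρ₀| with hPdef
  have hL0 : 0 ≤ L := by positivity
  have hP0 : 0 ≤ P := abs_nonneg _
  set g : ℕ → ℝ → ℝ := fun k r => (-(t ^ r)) ^ k / Real.Gamma (r * k + 1) with hgdef
  set g' : ℕ → ℝ → ℝ := fun k r =>
    (-1:ℝ) ^ k * k * t ^ (r * k) * (Real.log t - digamma (r * k + 1)) /
      Real.Gamma (r * k + 1) with hg'def
  set u : ℕ → ℝ := fun k =>
    (k:ℝ) * M ^ k * (L + (Real.log ((k:ℝ) + 1) + P)) * (2 / Real.Gamma (ρ₀ * k + 1)) with hudef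
  -- generic bounds for r ∈ Ioo ρ₀ 1
  have hpow_gen : ∀ (k : ℕ), ∀ r ∈ Set.Ioo ρ₀ (1:ℝ), t ^ (r * (k:ℝ)) ≤ M ^ k := by
    intro k r hr
    have hrpos : 0 < r := hρ₀0.trans hr.1
    calc t ^ (r * (k:ℝ)) ≤ M ^ (r * (k:ℝ)) :=
          Real.rpow_le_rpow htpos.le htM (by positivity)
      _ ≤ M ^ ((k:ℝ)) := Real.rpow_le_rpow_of_exponent_le hM1
          (by nlinarith [hr.2, Nat.cast_nonneg (α := ℝ) k])
      _ = M ^ k := Real.rpow_natCast M k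
  have hΓle_gen : ∀ (k : ℕ), ∀ r ∈ Set.Ioo ρ₀ (1:ℝ),
      Real.Gamma (ρ₀ * k + 1) ≤ 2 * Real.Gamma (r * k + 1) := by
    intro k r hr
    exact MLAux.gamma_le_two_mul_gamma
      (by nlinarith [Nat.cast_nonneg (α := ℝ) k])
      (by nlinarith [hr.1.le, Nat.cast_nonneg (α := ℝ) k])
  -- A : termwise derivatives
  have hderiv : ∀ (k : ℕ), ∀ r ∈ Set.Ioo ρ₀ (1:ℝ), HasDerivAt (g k) (g' k r) r := by
    intro k r hr
    have hrpos : 0 < r := hρ₀0.trans hr.1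
    have hxpos : (0:ℝ) < r * k + 1 := by positivity
    have hΓ : 0 < Real.Gamma (r * k + 1) := Real.Gamma_pos_of_pos hxpos
    have hne : ∀ m : ℕ, r * k + 1 ≠ -(m : ℝ) := fun m =>
      ne_of_gt (lt_of_le_of_lt (neg_nonpos.mpr m.cast_nonneg) hxpos)
    have hlin : HasDerivAt (fun s : ℝ => s * (k:ℝ) + 1) (k:ℝ) r := by
      simpa using ((hasDerivAt_id r).mul_const (k:ℝ)).add_const 1
    have hG : HasDerivAt (fun s : ℝ => Real.Gamma (s * k + 1))
        (deriv Real.Gamma (r * k + 1) * k) r := by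
      have := ((Real.differentiableAt_Gamma hne).hasDerivAt).comp r hlin
      simpa [Function.comp_def] using this
    have hpow : HasDerivAt (fun s : ℝ => t ^ (s * (k:ℝ)))
        (t ^ (r * (k:ℝ)) * Real.log t * k) r := by
      have hc := (Real.hasStrictDerivAt_const_rpow htpos (r * k)).hasDerivAt
      have := hc.comp r ((hasDerivAt_id r).mul_const (k:ℝ))
      simpa [Function.comp_def] using this
    have hquot := (hpow.div hG hΓ.ne').const_mul ((-1:ℝ) ^ k)
    have hfun : (fun s : ℝ => (-1:ℝ) ^ k * (t ^ (s * (k:ℝ)) / Real.Gamma (s * k + 1))) = g k := by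
      funext s
      have hpk : ((t:ℝ) ^ s) ^ k = t ^ (s * (k:ℝ)) := by
        rw [← Real.rpow_natCast (t ^ s) k, ← Real.rpow_mul htpos.le]
      have hneg : (-(t ^ s) : ℝ) ^ k = (-1:ℝ) ^ k * t ^ (s * (k:ℝ)) := by
        rw [neg_pow, hpk]
      simp only [hgdef, hneg, mul_div_assoc]
    simp only [Pi.div_apply] at hquot
    rw [hfun] at hquot
    replace hquot : HasDerivAt (g k) _ r := hquot
    convert hquot using 1
    simp only [hg'def, digamma]
    field_simp
  -- B : bound
  have hbound : ∀ (k : ℕ), ∀ r ∈ Set.Ioo ρ₀ (1:ℝ), ‖g' k r‖ ≤ u k := by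
    intro k r hr
    rcases Nat.eq_zero_or_pos k with rfl | hk
    · simp [hg'def, hudef]
    have hk1 : (1:ℝ) ≤ (k:ℝ) := Nat.one_le_cast.mpr hk
    have hrpos : 0 < r := hρ₀0.trans hr.1
    have hxpos : (0:ℝ) < r * k + 1 := by positivity
    have hΓr : 0 < Real.Gamma (r * k + 1) := Real.Gamma_pos_of_pos hxpos
    have hΓ0 : 0 < Real.Gamma (ρ₀ * k + 1) := Real.Gamma_pos_of_pos (by positivity)
    have htpow : 0 < t ^ (r * (k:ℝ)) := Real.rpow_pos_of_pos htpos _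
    have hpowle := hpow_gen k r hr
    have hΓle := hΓle_gen k r hr
    have hlogt : |Real.log t| ≤ L := by
      have h1 : Real.log t ≤ Real.log T := Real.log_le_log htpos ht2
      have h2 : Real.log t₁ ≤ Real.log t := Real.log_le_log ht₁ ht1
      rw [abs_le]
      constructor
      · simp only [hLdef]
        have := neg_abs_le (Real.log t₁)
        have := abs_nonneg (Real.log T)
        linarith
      · simp only [hLdef]
        have := le_abs_self (Real.log T)
        have := abs_nonneg (Real.log t₁)
        linarith
    have hd1 : digamma (r * k + 1) ≤ Real.log ((k:ℝ) + 1) := by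
      calc digamma (r * k + 1) ≤ Real.log (r * k + 1) := MLAux.digamma_le_log hxpos
        _ ≤ Real.log ((k:ℝ) + 1) := Real.log_le_log hxpos (by nlinarith [hr.2])
    have hd2 : Real.log ρ₀ ≤ digamma (r * k + 1) := by
      have hrk : r ≤ r * k := le_mul_of_one_le_right hrpos.le hk1
      have hgt1 : (1:ℝ) < r * k + 1 := by nlinarith [hr.1]
      calc Real.log ρ₀ ≤ Real.log (r * k + 1 - 1) := by
            apply Real.log_le_log hρ₀0
            linarith [hrk, hr.1]
        _ ≤ digamma (r * k + 1) := MLAux.log_le_digamma hgt1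
    have hlogk0 : 0 ≤ Real.log ((k:ℝ) + 1) := Real.log_nonneg (by linarith)
    have hdig : |digamma (r * k + 1)| ≤ Real.log ((k:ℝ) + 1) + P := by
      rw [abs_le]
      constructor
      · have := neg_abs_le (Real.log ρ₀)
        simp only [hPdef]
        linarith
      · linarith
    have heq : ‖g' k r‖ = (k:ℝ) * t ^ (r * (k:ℝ)) * |Real.log t - digamma (r * k + 1)| /
        Real.Gamma (r * k + 1) := by
      simp only [hg'def, Real.norm_eq_abs, abs_div, abs_mul, abs_pow, abs_neg, abs_one, one_pow,
        one_mul, Nat.abs_cast, abs_of_pos hΓr, abs_of_pos htpow]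
    rw [heq]
    have habs : |Real.log t - digamma (r * k + 1)| ≤ L + (Real.log ((k:ℝ) + 1) + P) := by
      calc |Real.log t - digamma (r * k + 1)| ≤ |Real.log t| + |digamma (r * k + 1)| :=
            abs_sub _ _
        _ ≤ L + (Real.log ((k:ℝ) + 1) + P) := by linarith
    have hnum : (k:ℝ) * t ^ (r * (k:ℝ)) * |Real.log t - digamma (r * k + 1)| ≤
        (k:ℝ) * M ^ k * (L + (Real.log ((k:ℝ) + 1) + P)) := by
      apply mul_le_mul (mul_le_mul_of_nonneg_left hpowle (Nat.cast_nonneg k)) habs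
        (abs_nonneg _) (by positivity)
    calc (k:ℝ) * t ^ (r * (k:ℝ)) * |Real.log t - digamma (r * k + 1)| /
          Real.Gamma (r * k + 1)
        ≤ ((k:ℝ) * M ^ k * (L + (Real.log ((k:ℝ) + 1) + P))) /
          (Real.Gamma (ρ₀ * k + 1) / 2) :=
          div_le_div₀ (by positivity) hnum (by positivity) (by linarith)
      _ = u k := by
          simp only [hudef]
          field_simp
  -- C : summability of the bound
  have hsum_u : Summable u := by
    have core := (MLAux.summable_pow_div_gamma hρ₀0 (4 * M) (by positivity)).mul_left
      (2 * (L + P + 1))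
    apply Summable.of_nonneg_of_le _ _ core
    · intro k
      have hlogk0 : 0 ≤ Real.log ((k:ℝ) + 1) :=
        Real.log_nonneg (le_add_of_nonneg_left (Nat.cast_nonneg k))
      have hΓ0 : 0 < Real.Gamma (ρ₀ * k + 1) := Real.Gamma_pos_of_pos (by positivity)
      simp only [hudef]
      have h1 : 0 ≤ L + (Real.log ((k:ℝ) + 1) + P) := by linarith
      positivity
    · intro k
      have hΓ0 : 0 < Real.Gamma (ρ₀ * k + 1) := Real.Gamma_pos_of_pos (by positivity)
      have hlogk0 : 0 ≤ Real.log ((k:ℝ) + 1) :=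
        Real.log_nonneg (le_add_of_nonneg_left (Nat.cast_nonneg k))
      have hk2 : (k:ℝ) ≤ 2 ^ k := by exact_mod_cast (Nat.lt_two_pow_self (n := k)).le
      have hlogk : Real.log ((k:ℝ) + 1) ≤ (k:ℝ) := by
        have := Real.log_le_sub_one_of_pos (show (0:ℝ) < (k:ℝ) + 1 by positivity)
        linarith
      have h2k1 : (1:ℝ) ≤ 2 ^ k := one_le_pow₀ one_le_two
      have hMk : (0:ℝ) < M ^ k := by positivity
      have key : (k:ℝ) * M ^ k * (L + (Real.log ((k:ℝ) + 1) + P)) ≤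
          (L + P + 1) * (4 ^ k * M ^ k) := by
        have hstep : L + (Real.log ((k:ℝ) + 1) + P) ≤ (L + P + 1) * 2 ^ k := by
          nlinarith [hk2, hlogk, hL0, hP0, h2k1]
        have h4 : (4:ℝ) ^ k = 2 ^ k * 2 ^ k := by rw [← mul_pow]; norm_num
        calc (k:ℝ) * M ^ k * (L + (Real.log ((k:ℝ) + 1) + P))
            ≤ (2 ^ k * M ^ k) * ((L + P + 1) * 2 ^ k) := by
              apply mul_le_mul (mul_le_mul_of_nonneg_right hk2 hMk.le) hstep
                (by linarith) (by positivity)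
          _ = (L + P + 1) * (4 ^ k * M ^ k) := by rw [h4]; ring
      calc (k:ℝ) * M ^ k * (L + (Real.log ((k:ℝ) + 1) + P)) * (2 / Real.Gamma (ρ₀ * k + 1))
          ≤ (L + P + 1) * (4 ^ k * M ^ k) * (2 / Real.Gamma (ρ₀ * k + 1)) :=
            mul_le_mul_of_nonneg_right key (by positivity)
        _ = 2 * (L + P + 1) * ((4 * M) ^ k / Real.Gamma (ρ₀ * k + 1)) := by
            rw [mul_pow]; ring
  -- D : summability at the point ρ
  have hmem : ρ ∈ Set.Ioo ρ₀ (1:ℝ) := ⟨hρ1, hρ2⟩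
  have hsum_g : Summable (fun k => g k ρ) := by
    have core := (MLAux.summable_pow_div_gamma hρ₀0 M hMpos).mul_left 2
    apply Summable.of_norm
    apply Summable.of_nonneg_of_le (fun k => norm_nonneg _) _ core
    intro k
    have hρpos : 0 < ρ := hρ₀0.trans hρ1
    have hxpos : (0:ℝ) < ρ * k + 1 := by positivity
    have hΓρ : 0 < Real.Gamma (ρ * k + 1) := Real.Gamma_pos_of_pos hxpos
    have hΓ0 : 0 < Real.Gamma (ρ₀ * k + 1) := Real.Gamma_pos_of_pos (by positivity)
    have hpk : ((t:ℝ) ^ ρ) ^ k = t ^ (ρ * (k:ℝ)) := by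
      rw [← Real.rpow_natCast (t ^ ρ) k, ← Real.rpow_mul htpos.le]
    have heq : ‖g k ρ‖ = t ^ (ρ * (k:ℝ)) / Real.Gamma (ρ * k + 1) := by
      simp only [hgdef, Real.norm_eq_abs, abs_div, abs_pow, abs_neg,
        abs_of_pos (Real.rpow_pos_of_pos htpos ρ), abs_of_pos hΓρ, hpk]
    rw [heq]
    calc t ^ (ρ * (k:ℝ)) / Real.Gamma (ρ * k + 1)
        ≤ M ^ k / (Real.Gamma (ρ₀ * k + 1) / 2) :=
          div_le_div₀ (by positivity) (hpow_gen k ρ hmem) (by positivity)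
            (by linarith [hΓle_gen k ρ hmem])
      _ = 2 * (M ^ k / Real.Gamma (ρ₀ * k + 1)) := by
          field_simp
  have H := hasDerivAt_tsum_of_isPreconnected hsum_u isOpen_Ioo
    (convex_Ioo ρ₀ 1).isPreconnected hderiv hbound hmem hsum_g hmem
  exact H
end
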